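/- In the group G₈₀: (1) the image of the additive group (K, +) (i.e. the kernel of the projection G₈₀ → C) is the unique subgroup of G₈₀ isomorphic to (ℤ/2)⁴; (2) any two subgroups of G₈₀ of order 5 are conjugate; and (3) the only normal subgroups of G₈₀ are the trivial subgroup, the image of (K, +), and G₈₀ itself. -/

import Mathlib

noncomputable section

variable (K : Type) [Field K] [Fintype K]

/-- The subgroup `C` of `Kˣ` consisting of the fifth roots of unity; when `K` has `16`
elements, `Kˣ` is cyclic of order `15` and `C` is its unique subgroup of order `5`. -/
def C : Subgroup Kˣ := rootsOfUnity 5 K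

/-- Each unit of `K` acts on the (multiplicatively written) additive group of `K` by
multiplication, as a group automorphism. -/
def unitAction : Kˣ →* MulAut (Multiplicative K) where
  toFun c := AddEquiv.toMultiplicative (DistribMulAction.toAddAut Kˣ K c)
  map_one' := by ext x; simp
  map_mul' c d := by ext x; simp [mul_smul]

/-- The action of the fifth roots of unity `C` on `(K, +)` by multiplication. -/
def phi : C K →* MulAut (Multiplicative K) := (unitAction K).comp (C K).subtype

/-- The group `G₈₀ = (K, +) ⋊ C`: for `K` a field with `16` elements this is the semidirect
product `(ℤ/2)⁴ ⋊ ℤ/5` of order `80` considered in the paper. -/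
abbrev G80 : Type := SemidirectProduct (Multiplicative K) (C K) (phi K)

open SemidirectProduct

lemma phi_apply_aux (c : C K) (x : Multiplicative K) :
    (phi K c x : Multiplicative K) =
      Multiplicative.ofAdd (((c : Kˣ) : K) * Multiplicative.toAdd x) := rfl

lemma phi_fixed_aux {c : C K} (hc : c ≠ 1) {x : Multiplicative K}
    (hx : phi K c x = x) : x = 1 := by
  have h : ((c : Kˣ) : K) * Multiplicative.toAdd x = Multiplicative.toAdd x := by
    have := congrArg Multiplicative.toAdd hx
    simpa [phi_apply_aux] using this
  by_contra hx1
  have hy : Multiplicative.toAdd x ≠ 0 := by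
    intro h0
    apply hx1
    have : x = Multiplicative.ofAdd (0 : K) := by
      rw [← h0]; rfl
    simpa using this
  have hc1 : ((c : Kˣ) : K) = 1 := by
    have := mul_right_cancel₀ hy (h.trans (one_mul (Multiplicative.toAdd x)).symm)
    exact this
  exact hc (Subtype.ext (Units.ext hc1))

lemma card_C_aux (hK : Fintype.card K = 16) : Nat.card (C K) = 5 := by
  have hcu : Nat.card Kˣ = 15 := by rw [Nat.card_units, Nat.card_eq_fintype_card, hK]
  obtain ⟨g, hg⟩ := IsCyclic.exists_generator (α := Kˣ)
  have hg15 : orderOf g = 15 := by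
    rw [orderOf_eq_card_of_forall_mem_zpowers hg, hcu]
  have h5 : orderOf (g ^ 3) = 5 := by
    rw [orderOf_pow, hg15]
    norm_num
  have hprim : IsPrimitiveRoot (g ^ 3) 5 := h5 ▸ IsPrimitiveRoot.orderOf (g ^ 3)
  rw [show C K = rootsOfUnity 5 K from rfl]
  exact hprim.card_rootsOfUnity'

lemma card_Mult_aux (hK : Fintype.card K = 16) :
    Nat.card (Multiplicative K) = 16 := by
  rw [Nat.card_eq_fintype_card]
  simpa using hK

/-- The underlying type of `G80 K` is just a product. -/
def g80Equiv : G80 K ≃ Multiplicative K × C K where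
  toFun x := (x.left, x.right)
  invFun p := ⟨p.1, p.2⟩
  left_inv x := rfl
  right_inv p := rfl

lemma finite_G80 : Finite (G80 K) := Finite.of_equiv _ (g80Equiv K).symm

lemma card_G80_aux (hK : Fintype.card K = 16) : Nat.card (G80 K) = 80 := by
  rw [Nat.card_congr (g80Equiv K), Nat.card_prod, card_Mult_aux K hK, card_C_aux K hK]

lemma card_ker_aux (hK : Fintype.card K = 16) :
    Nat.card ((SemidirectProduct.rightHom : G80 K →* C K).ker) = 16 := by
  rw [← range_inl_eq_ker_rightHom]
  rw [← card_Mult_aux K hK]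
  exact (Nat.card_congr (MonoidHom.ofInjective
    (inl_injective (φ := phi K))).toEquiv).symm

/-- A nontrivial subgroup of `(K, +)` invariant under multiplication by `C` is everything. -/
lemma invariant_eq_top_aux (hK : Fintype.card K = 16) (H : Subgroup (Multiplicative K))
    (hinv : ∀ (c : C K) (a : Multiplicative K), a ∈ H → phi K c a ∈ H)
    (hne : H ≠ ⊥) : H = ⊤ := by
  haveI : Fact (Nat.Prime 5) := ⟨by norm_num⟩
  letI act : MulAction (C K) H :=
    { smul := fun c a => ⟨phi K c a, hinv c a a.2⟩
      one_smul := fun a => Subtype.ext (by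
        show phi K 1 (a : Multiplicative K) = a
        rw [map_one]; rfl)
      mul_smul := fun c d a => Subtype.ext (by
        show phi K (c * d) (a : Multiplicative K) = phi K c (phi K d a)
        rw [map_mul]; rfl) }
  have hpg : IsPGroup 5 (C K) := IsPGroup.of_card (n := 1) (by rw [card_C_aux K hK]; norm_num)
  have hmod := hpg.card_modEq_card_fixedPoints (α := H)
  have hnontriv : Nontrivial (C K) := by
    have : 1 < Nat.card (C K) := by rw [card_C_aux K hK]; norm_num
    exact Finite.one_lt_card_iff_nontrivial.mp this
  obtain ⟨c, hc⟩ := exists_ne (1 : C K)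
  have hfix : Nat.card (MulAction.fixedPoints (C K) H) = 1 := by
    rw [Nat.card_eq_one_iff_unique]
    constructor
    · constructor
      intro a b
      have hval : ∀ z : MulAction.fixedPoints (C K) H,
          ((z : H) : Multiplicative K) = 1 := by
        intro z
        have hz := MulAction.mem_fixedPoints.mp z.2 c
        have : phi K c ((z : H) : Multiplicative K) = ((z : H) : Multiplicative K) :=
          congrArg Subtype.val hz
        exact phi_fixed_aux K hc this
      exact Subtype.ext (Subtype.ext ((hval a).trans (hval b).symm))
    · refine ⟨⟨⟨1, H.one_mem⟩, ?_⟩⟩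
      intro d
      exact Subtype.ext (map_one (phi K d))
  rw [hfix] at hmod
  have h1 : Nat.card H % 5 = 1 := by
    have := hmod
    unfold Nat.ModEq at this
    omega
  have hdvd : Nat.card H ∣ 16 := by
    have := Subgroup.card_subgroup_dvd_card H
    rwa [card_Mult_aux K hK] at this
  have hlt : 1 < Nat.card H := (Subgroup.one_lt_card_iff_ne_bot H).mpr hne
  have hcard : Nat.card H = 16 := by
    set n := Nat.card H with hn
    have hle : n ≤ 16 := Nat.le_of_dvd (by norm_num) hdvd
    interval_cases n <;> omega
  exact Subgroup.eq_top_of_card_eq H (by rw [hcard, card_Mult_aux K hK])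

/-- In `G₈₀` (for `K` a field with `16` elements): the kernel `N` of the projection
`G₈₀ → C` (the image of `(K, +)`) is the unique subgroup isomorphic to `(ℤ/2)⁴`; any two
subgroups of order `5` are conjugate; and the only normal subgroups are `1`, `N`, `G₈₀`. -/
theorem G80_normal_structure (hK : Fintype.card K = 16) :
    (∀ Γ : Subgroup (G80 K),
      Nonempty (Γ ≃* (Fin 4 → Multiplicative (ZMod 2))) →
      Γ = (SemidirectProduct.rightHom : G80 K →* C K).ker) ∧
    (∀ Γ₁ Γ₂ : Subgroup (G80 K), Nat.card Γ₁ = 5 → Nat.card Γ₂ = 5 →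
      ∃ g : G80 K, Γ₁.map (MulAut.conj g).toMonoidHom = Γ₂) ∧
    (∀ Γ : Subgroup (G80 K), Γ.Normal →
      Γ = ⊥ ∨ Γ = (SemidirectProduct.rightHom : G80 K →* C K).ker ∨ Γ = ⊤) := by
  haveI : Finite (G80 K) := finite_G80 K
  haveI : Fact (Nat.Prime 5) := ⟨by norm_num⟩
  refine ⟨?_, ?_, ?_⟩
  · -- Part 1
    intro Γ ⟨e⟩
    have hcard : Nat.card Γ = 16 := by
      rw [Nat.card_congr e.toEquiv]
      simp [Nat.card_pi]
    -- the image of Γ in C is trivial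
    set f := (SemidirectProduct.rightHom : G80 K →* C K).comp Γ.subtype with hf
    have hd1 : Nat.card f.range ∣ 5 := by
      rw [← card_C_aux K hK]
      exact Subgroup.card_subgroup_dvd_card f.range
    have hd2 : Nat.card f.range ∣ 16 := by
      rw [← hcard]
      exact Subgroup.card_dvd_of_surjective f.rangeRestrict f.rangeRestrict_surjective
    have hone : Nat.card f.range = 1 := Nat.eq_one_of_dvd_coprimes (by norm_num) hd2 hd1
    have hle : Γ ≤ (SemidirectProduct.rightHom : G80 K →* C K).ker := by
      intro x hx
      have : f ⟨x, hx⟩ ∈ f.range := ⟨⟨x, hx⟩, rfl⟩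
      rw [Subgroup.card_eq_one.mp hone] at this
      simpa [MonoidHom.mem_ker, hf] using this
    exact Subgroup.eq_of_le_of_card_ge hle (by rw [hcard, card_ker_aux K hK])
  · -- Part 2 : Sylow
    intro Γ₁ Γ₂ h1 h2
    have hfact : (Nat.card (G80 K)).factorization 5 = 1 := by
      rw [card_G80_aux K hK]
      have : (80 : ℕ) = 16 * 5 := by norm_num
      rw [this, Nat.factorization_mul (by norm_num) (by norm_num)]
      rw [Finsupp.add_apply, Nat.factorization_eq_zero_of_not_dvd (by norm_num),
        Nat.Prime.factorization_self (by norm_num)]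
    have hc1 : Nat.card Γ₁ = 5 ^ (Nat.card (G80 K)).factorization 5 := by
      rw [hfact, pow_one, h1]
    have hc2 : Nat.card Γ₂ = 5 ^ (Nat.card (G80 K)).factorization 5 := by
      rw [hfact, pow_one, h2]
    let P₁ : Sylow 5 (G80 K) := Sylow.ofCard Γ₁ hc1
    let P₂ : Sylow 5 (G80 K) := Sylow.ofCard Γ₂ hc2
    obtain ⟨g, hg⟩ := MulAction.exists_smul_eq (G80 K) P₁ P₂
    refine ⟨g, ?_⟩
    have : ((g • P₁ : Sylow 5 (G80 K)) : Subgroup (G80 K)) = Γ₂ := by rw [hg]; rfl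
    rw [← this]
    rfl
  · -- Part 3
    intro Γ hnorm
    by_cases hH : Γ.comap (inl : Multiplicative K →* G80 K) = ⊥
    · -- Γ meets the kernel trivially
      have hker1 : ∀ x ∈ Γ, SemidirectProduct.rightHom x = 1 → x = 1 := by
        intro x hx hr
        have hxk : x ∈ (inl : Multiplicative K →* G80 K).range := by
          rw [range_inl_eq_ker_rightHom]
          exact hr
        obtain ⟨a, rfl⟩ := hxk
        have : a ∈ Γ.comap (inl : Multiplicative K →* G80 K) := hx
        rw [hH, Subgroup.mem_bot] at this
        rw [this, map_one]
      have hinj : Function.Injective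
          ((SemidirectProduct.rightHom : G80 K →* C K).comp Γ.subtype) := by
        refine (injective_iff_map_eq_one _).mpr ?_
        intro x hx1
        exact Subtype.ext (hker1 x.1 x.2 hx1)
      have hdvd : Nat.card Γ ∣ 5 := by
        rw [← card_C_aux K hK]
        exact Subgroup.card_dvd_of_injective _ hinj
      rcases (Nat.Prime.eq_one_or_self_of_dvd (by norm_num) _ hdvd) with hc | hc
      · left
        exact Subgroup.card_eq_one.mp hc
      · -- order 5 normal subgroup: impossible
        exfalso
        have hne : Γ ≠ ⊥ := by
          intro hbot
          rw [hbot, Subgroup.card_eq_one.mpr rfl] at hc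
          norm_num at hc
        obtain ⟨g, hgΓ, hg1⟩ := (Subgroup.bot_or_exists_ne_one Γ).resolve_left hne
        have hgr : SemidirectProduct.rightHom g ≠ 1 := by
          intro h
          exact hg1 (hker1 g hgΓ h)
        set n : G80 K := inl (Multiplicative.ofAdd (1 : K)) with hn
        have hconj : n * g * n⁻¹ ∈ Γ := hnorm.conj_mem g hgΓ n
        have hone : n * g * n⁻¹ * g⁻¹ = 1 := by
          apply hker1 _ (mul_mem hconj (inv_mem hgΓ))
          simp [hn]
        have heq : n * g = g * n := by
          rw [← mul_inv_eq_iff_eq_mul]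
          rw [← mul_inv_eq_one]
          exact hone
        have hleft := congrArg SemidirectProduct.left heq
        simp only [hn, mul_left, left_inl, right_inl, map_one, MulAut.one_apply] at hleft
        have hfixed : phi K g.right (Multiplicative.ofAdd (1 : K)) =
            Multiplicative.ofAdd (1 : K) := by
          rw [mul_comm] at hleft
          exact (mul_left_cancel hleft).symm
        have : ((g.right : Kˣ) : K) * 1 = 1 := by
          have := congrArg Multiplicative.toAdd hfixed
          simpa [phi_apply_aux] using this
        apply hgr
        have : (g.right : Kˣ) = 1 := Units.ext (by simpa using this)
        exact Subtype.ext this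
    · -- Γ contains the kernel
      have htop : Γ.comap (inl : Multiplicative K →* G80 K) = ⊤ := by
        apply invariant_eq_top_aux K hK _ _ hH
        intro c a ha
        have : inl (phi K c a) ∈ Γ := by
          rw [inl_aut]
          simpa using hnorm.conj_mem _ ha (inr c)
        exact this
      have hNle : (SemidirectProduct.rightHom : G80 K →* C K).ker ≤ Γ := by
        intro x hx
        rw [← range_inl_eq_ker_rightHom] at hx
        obtain ⟨a, rfl⟩ := hx
        have : a ∈ Γ.comap (inl : Multiplicative K →* G80 K) := by
          rw [htop]; trivial
        exact this
      have hQdvd : Nat.card (Γ.map (SemidirectProduct.rightHom : G80 K →* C K)) ∣ 5 := by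
        rw [← card_C_aux K hK]
        exact Subgroup.card_subgroup_dvd_card _
      rcases (Nat.Prime.eq_one_or_self_of_dvd (by norm_num) _ hQdvd) with hc | hc
      · right; left
        have hbot : Γ.map (SemidirectProduct.rightHom : G80 K →* C K) = ⊥ :=
          Subgroup.card_eq_one.mp hc
        have hle : Γ ≤ (SemidirectProduct.rightHom : G80 K →* C K).ker :=
          (Subgroup.map_eq_bot_iff _).mp hbot
        exact le_antisymm hle hNle
      · right; right
        have hQtop : Γ.map (SemidirectProduct.rightHom : G80 K →* C K) = ⊤ :=
          Subgroup.eq_top_of_card_eq _ (by rw [hc, card_C_aux K hK])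
        have := Subgroup.comap_map_eq (f := (SemidirectProduct.rightHom : G80 K →* C K)) Γ
        rw [hQtop, Subgroup.comap_top, sup_of_le_left hNle] at this
        exact this.symm

end
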